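/- Let w be a word of length n, 𝒫 a Parikh vector of norm p = |𝒫|, and e a position with e + 1 ≤ n − 1. Suppose (b₁,h₁,t₁,e) and (b₂,h₂,t₂,e) are occurrences with abelian period 𝒫 in w, ending at the same position e, with t₂ ≤ t₁. If 𝒫_{w[e−t₁+1..e+1]} ⊆ 𝒫 (so that the occurrence with the longer tail extends to position e+1), then 𝒫_{w[e−t₂+1..e+1]} ⊆ 𝒫, and consequently (b₂, h₂, (t₂+1) mod p, e+1) is an occurrence with abelian period 𝒫 in w. -/

import Mathlib

/-- The Parikh vector of a word `v`: the number of occurrences of each letter. -/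
def parikh {α : Type*} [DecidableEq α] (v : List α) : α → ℕ := fun a => v.count a

/-- The norm of a Parikh vector: the sum of its components. -/
def pnorm {α : Type*} [Fintype α] (P : α → ℕ) : ℕ := ∑ a, P a

/-- Non-strict containment of Parikh vectors: `P ⊆ Q`. -/
def PLe {α : Type*} (P Q : α → ℕ) : Prop := ∀ a, P a ≤ Q a

/-- Strict containment of Parikh vectors: `P ⊂ Q`, i.e. componentwise `≤` and smaller norm. -/
def PLt {α : Type*} [Fintype α] (P Q : α → ℕ) : Prop :=
  (∀ a, P a ≤ Q a) ∧ pnorm P < pnorm Q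

/-- The substring `w[i..j]` of `w`, from position `i` to position `j`, both included. -/
def substr {α : Type*} (w : List α) (i j : ℕ) : List α := (w.drop i).take (j + 1 - i)

/-- `(b,h,t,e)` is an occurrence of a substring of `w` with abelian period `P`:
`w[b..e] = u₀u₁⋯u_{k-1}u_k` for some `k ≥ 2`, with `|u₀| = h`, `|u_k| = t`,
`𝒫_{u_1} = ⋯ = 𝒫_{u_{k-1}} = P`, `𝒫_{u₀} ⊂ P` and `𝒫_{u_k} ⊂ P`. -/
def IsOcc {α : Type*} [Fintype α] [DecidableEq α]
    (w : List α) (P : α → ℕ) (b h t e : ℕ) : Prop :=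
  b ≤ e ∧ e < w.length ∧
  ∃ (u0 uk : List α) (us : List (List α)),
    substr w b e = u0 ++ us.flatten ++ uk ∧
    u0.length = h ∧ uk.length = t ∧
    1 ≤ us.length ∧
    (∀ u ∈ us, parikh u = P) ∧
    PLt (parikh u0) P ∧ PLt (parikh uk) P

/-- An occurrence `(b,h,t,e)` with abelian period `P` is left-maximal if there is no
occurrence `(b-1,h',t',e)` with the same abelian period `P`. -/
def LeftMaximal {α : Type*} [Fintype α] [DecidableEq α]
    (w : List α) (P : α → ℕ) (b h t e : ℕ) : Prop :=
  IsOcc w P b h t e ∧ ∀ b' h' t', b' + 1 = b → ¬ IsOcc w P b' h' t' e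

/-- An occurrence `(b,h,t,e)` with abelian period `P` is right-maximal if there is no
occurrence `(b,h',t',e+1)` with the same abelian period `P`. -/
def RightMaximal {α : Type*} [Fintype α] [DecidableEq α]
    (w : List α) (P : α → ℕ) (b h t e : ℕ) : Prop :=
  IsOcc w P b h t e ∧ ∀ h' t', ¬ IsOcc w P b h' t' (e + 1)

/-- An abelian run of period `P` is a maximal occurrence `(b,h,t,e)` with abelian period `P`
such that `e - b - h - t + 1 ≥ 2|P|`. -/
def IsAbelianRun {α : Type*} [Fintype α] [DecidableEq α]
    (w : List α) (P : α → ℕ) (b h t e : ℕ) : Prop :=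
  LeftMaximal w P b h t e ∧ RightMaximal w P b h t e ∧
  b + h + t + 2 * pnorm P ≤ e + 1

/- The tail `w[e-t₂+1..e+1]` is a suffix of `w[e-t₁+1..e+1]`, so its Parikh vector is contained
in `P` as well. Appending `w[e+1]` to the tail of the second occurrence then gives a tail whose
Parikh vector is contained in `P`: either strictly, and it stays the tail, or with equality, and
it becomes one more block, leaving an empty tail. In both cases the new tail length is
`(t₂ + 1) mod |P|`. -/

section Parikh

variable {α : Type*}

lemma PLe.trans {P Q R : α → ℕ} (hPQ : PLe P Q) (hQR : PLe Q R) : PLe P R :=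
  fun a => (hPQ a).trans (hQR a)

lemma parikh_le_of_sublist [DecidableEq α] {u v : List α} (h : u.Sublist v) :
    PLe (parikh u) (parikh v) :=
  fun a => h.count_le a

variable [Fintype α]

lemma PLe.pnorm_le {P Q : α → ℕ} (h : PLe P Q) : pnorm P ≤ pnorm Q :=
  Finset.sum_le_sum fun a _ => h a

lemma PLe.plt_or_eq {P Q : α → ℕ} (h : PLe P Q) : PLt P Q ∨ P = Q := by
  rcases h.pnorm_le.lt_or_eq with hlt | heq
  · exact Or.inl ⟨h, hlt⟩
  · exact Or.inr <| funext fun a =>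
      (Finset.sum_eq_sum_iff_of_le fun a _ => h a).1 heq a (Finset.mem_univ a)

variable [DecidableEq α]

lemma pnorm_parikh (v : List α) : pnorm (parikh v) = v.length := by
  simpa [pnorm, parikh] using
    Multiset.sum_count_eq_card (s := Finset.univ) (m := (v : Multiset α)) (by simp)

lemma plt_parikh_nil {P : α → ℕ} (hP : 0 < pnorm P) : PLt (parikh ([] : List α)) P :=
  ⟨fun _ => Nat.zero_le _, by rwa [pnorm_parikh]⟩

end Parikh

section Substr

variable {α : Type*} (w : List α)

lemma length_substr (i j : ℕ) : (substr w i j).length = min (j + 1 - i) (w.length - i) := by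
  simp [substr]

lemma substr_append_substr {i j k : ℕ} (hij : i ≤ j + 1) (hjk : j ≤ k) :
    substr w i j ++ substr w (j + 1) k = substr w i k := by
  unfold substr
  rw [show w.drop (j + 1) = (w.drop i).drop (j + 1 - i) by rw [List.drop_drop]; congr 1; omega,
    ← List.take_add]
  congr 1; omega

lemma substr_eq_drop_substr {i₁ i₂ : ℕ} (j : ℕ) (h : i₁ ≤ i₂) :
    substr w i₂ j = (substr w i₁ j).drop (i₂ - i₁) := by
  unfold substr
  rw [List.drop_take, List.drop_drop, Nat.add_sub_cancel' h]
  congr 1; omega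

lemma substr_sublist_substr {i₁ i₂ : ℕ} (j : ℕ) (h : i₁ ≤ i₂) :
    (substr w i₂ j).Sublist (substr w i₁ j) := by
  rw [substr_eq_drop_substr w j h]
  exact List.drop_sublist _ _

variable {w}

lemma eq_substr_of_substr_eq_append {b e : ℕ} {x y : List α} (hbe : b ≤ e) (hew : e < w.length)
    (h : substr w b e = x ++ y) : y.length ≤ e + 1 - b ∧ y = substr w (e + 1 - y.length) e := by
  have hlen := congrArg List.length h
  simp only [length_substr, List.length_append] at hlen
  refine ⟨by omega, ?_⟩
  rw [substr_eq_drop_substr w e (show b ≤ e + 1 - y.length by omega), h,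
    show e + 1 - y.length - b = x.length by omega]
  exact List.drop_left.symm

end Substr

section Occurrence

variable {α : Type*} [Fintype α] [DecidableEq α] {w : List α} {P : α → ℕ}

lemma isOcc_of_tail_ple {b h e : ℕ} {u0 v : List α} {us : List (List α)}
    (hbe : b ≤ e) (hew : e < w.length) (hsplit : substr w b e = u0 ++ us.flatten ++ v)
    (hu0 : u0.length = h) (hus : 1 ≤ us.length) (husP : ∀ u ∈ us, parikh u = P)
    (hu0P : PLt (parikh u0) P) (hvP : PLe (parikh v) P) :
    IsOcc w P b h (v.length % pnorm P) e := by
  rcases hvP.plt_or_eq with hlt | heq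
  · have hmod : v.length % pnorm P = v.length :=
      Nat.mod_eq_of_lt (pnorm_parikh v ▸ hlt.2)
    exact ⟨hbe, hew, u0, v, us, hsplit, hu0, hmod.symm, hus, husP, hu0P, hlt⟩
  · have hmod : v.length % pnorm P = 0 := by rw [← pnorm_parikh, heq, Nat.mod_self]
    refine ⟨hbe, hew, u0, [], us ++ [v], by simpa using hsplit, hu0, by simp [hmod],
      by simp, ?_, hu0P, plt_parikh_nil (hu0P.2.trans_le' (Nat.zero_le _))⟩
    simp only [List.mem_append, List.mem_singleton]
    rintro u (hu | rfl)
    exacts [husP u hu, heq]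

lemma IsOcc.succ_of_tail_ple {b h t e : ℕ} (hocc : IsOcc w P b h t e) (hew : e + 1 < w.length)
    (htail : PLe (parikh (substr w (e + 1 - t) (e + 1))) P) :
    IsOcc w P b h ((t + 1) % pnorm P) (e + 1) := by
  obtain ⟨hbe, -, u0, uk, us, hsplit, hu0, rfl, hus, husP, hu0P, -⟩ := hocc
  obtain ⟨htb, hukeq⟩ := eq_substr_of_substr_eq_append hbe (by omega) hsplit
  set t := uk.length
  have hsplit' : substr w b (e + 1) = u0 ++ us.flatten ++ substr w (e + 1 - t) (e + 1) := by
    rw [← substr_append_substr w (by omega) (Nat.le_succ e), hsplit, List.append_assoc, hukeq,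
      substr_append_substr w (by omega) (Nat.le_succ e)]
  have hlen : (substr w (e + 1 - t) (e + 1)).length = t + 1 := by
    rw [length_substr]; omega
  simpa [hlen] using isOcc_of_tail_ple (by omega) hew hsplit' hu0 hus husP hu0P htail

end Occurrence

theorem occ_shorter_tail_extends_general {α : Type*} [Fintype α] [DecidableEq α]
    (w : List α) (P : α → ℕ) (t₁ b₂ h₂ t₂ e : ℕ)
    (hocc₂ : IsOcc w P b₂ h₂ t₂ e)
    (htt : t₂ ≤ t₁)
    (he : e + 1 ≤ w.length - 1)
    (hext : PLe (parikh (substr w (e + 1 - t₁) (e + 1))) P) :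
    PLe (parikh (substr w (e + 1 - t₂) (e + 1))) P ∧
      IsOcc w P b₂ h₂ ((t₂ + 1) % pnorm P) (e + 1) := by
  have hshort : PLe (parikh (substr w (e + 1 - t₂) (e + 1))) P :=
    (parikh_le_of_sublist (substr_sublist_substr w (e + 1) (by omega))).trans hext
  exact ⟨hshort, hocc₂.succ_of_tail_ple (by omega) hshort⟩

/-- If the occurrence with the longer tail ending at `e` extends to `e+1`, then so does any
occurrence ending at `e` with a shorter tail. -/
theorem occ_shorter_tail_extends {α : Type*} [Fintype α] [DecidableEq α]
    (w : List α) (P : α → ℕ) (b₁ h₁ t₁ b₂ h₂ t₂ e : ℕ)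
    (hocc₁ : IsOcc w P b₁ h₁ t₁ e) (hocc₂ : IsOcc w P b₂ h₂ t₂ e)
    (htt : t₂ ≤ t₁)
    (he : e + 1 ≤ w.length - 1)
    (hext : PLe (parikh (substr w (e + 1 - t₁) (e + 1))) P) :
    PLe (parikh (substr w (e + 1 - t₂) (e + 1))) P ∧
      IsOcc w P b₂ h₂ ((t₂ + 1) % pnorm P) (e + 1) :=
  occ_shorter_tail_extends_general w P t₁ b₂ h₂ t₂ e hocc₂ htt he hext
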